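/- Let Ω1 and Ω2 be finite multisets of solution mappings, domain-uniform with domains W1 and W2 respectively, and suppose S = W1 ∩ W2 is nonempty. Let ρ : V → V be injective on S with ρ(S) disjoint from W1 ∪ W2, let Ω3 be the multiset obtained from Ω2 by replacing each μ2 ∈ Ω2 with the mapping μ3 of domain (W2 \ S) ∪ ρ(S) defined by μ3(x) = μ2(x) for x ∈ W2 \ S and μ3(ρ(x)) = μ2(x) for x ∈ S, and let F be the selection formula given by the conjunction of the atoms (x = ρ(x)) over x ∈ S. Then the SPARQL minus operation satisfies Ω1 − Ω2 = Ω1 \ σ_F(Ω1 ⋈ Ω3) as an equality of multisets. In other words, the minus operator of the W3C SPARQL algebra is expressible using join, selection and simple difference. -/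

import Mathlib

open scoped Classical

noncomputable section

/-- A solution mapping: a finite partial function from variables to terms. -/
abbrev SMap (V T : Type) := Finmap (fun _ : V => T)

variable {V T : Type} [DecidableEq V] [DecidableEq T]

/-- Two solution mappings are compatible if they agree on the
intersection of their domains. -/
def Compat (μ1 μ2 : SMap V T) : Prop :=
  ∀ x ∈ μ1, x ∈ μ2 → μ1.lookup x = μ2.lookup x

/-- Join of two multisets of solution mappings: unions of compatible pairs,
multiplicities multiply and add over all decompositions. -/
def mjoin (Ω1 Ω2 : Multiset (SMap V T)) : Multiset (SMap V T) :=
  Ω1.bind fun μ1 => (Ω2.filter fun μ2 => Compat μ1 μ2).map fun μ2 => μ1 ∪ μ2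

/-- Simple difference: keep (with multiplicity) the mappings of `Ω1`
incompatible with every element of `Ω2`. -/
def msdiff (Ω1 Ω2 : Multiset (SMap V T)) : Multiset (SMap V T) :=
  Ω1.filter fun μ1 => ∀ μ2 ∈ Ω2, ¬ Compat μ1 μ2

/-- SPARQL minus: keep (with multiplicity) the mappings of `Ω1` such that every
element of `Ω2` is incompatible with it or has disjoint domain. -/
def sminus (Ω1 Ω2 : Multiset (SMap V T)) : Multiset (SMap V T) :=
  Ω1.filter fun μ1 => ∀ μ2 ∈ Ω2, ¬ Compat μ1 μ2 ∨ μ1.keys ∩ μ2.keys = ∅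

/-- Domain of a multiset of mappings: the union of the domains of its elements. -/
def mdom (Ω : Multiset (SMap V T)) : Finset V := (Ω.map Finmap.keys).sup

/-- A multiset of mappings is domain-uniform when all its elements have the
same domain. -/
def DomUniform (Ω : Multiset (SMap V T)) : Prop :=
  ∀ μ1 ∈ Ω, ∀ μ2 ∈ Ω, Finmap.keys μ1 = Finmap.keys μ2

/-- Three truth values: true, false, error. -/
inductive TV where | t | f | e
deriving DecidableEq

/-- Strong Kleene conjunction. -/
def TV.andTV : TV → TV → TV
  | .t, q => q
  | .f, _ => .f
  | .e, .t => .e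
  | .e, .f => .f
  | .e, .e => .e

/-- Strong Kleene disjunction. -/
def TV.orTV : TV → TV → TV
  | .t, _ => .t
  | .f, q => q
  | .e, .t => .t
  | .e, .f => .e
  | .e, .e => .e

/-- Three-valued negation. -/
def TV.notTV : TV → TV
  | .t => .f
  | .f => .t
  | .e => .e

/-- Selection formulas, built from atoms `x = c`, `x = y` and `bound x`. -/
inductive SForm (V T : Type) where
  | eqc : V → T → SForm V T
  | eqv : V → V → SForm V T
  | bound : V → SForm V T
  | fand : SForm V T → SForm V T → SForm V T
  | for' : SForm V T → SForm V T → SForm V T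
  | fnot : SForm V T → SForm V T

/-- Three-valued evaluation of a selection formula on a solution mapping. -/
def evalF (μ : SMap V T) : SForm V T → TV
  | .eqc x c =>
    match μ.lookup x with
    | some a => if a = c then .t else .f
    | none => .e
  | .eqv x y =>
    match μ.lookup x, μ.lookup y with
    | some a, some b => if a = b then .t else .f
    | some _, none => .e
    | none, _ => .e
  | .bound x => if x ∈ μ then .t else .f
  | .fand F1 F2 => (evalF μ F1).andTV (evalF μ F2)
  | .for' F1 F2 => (evalF μ F1).orTV (evalF μ F2)
  | .fnot F1 => (evalF μ F1).notTV

/-- Selection: keep (with multiplicity) the mappings evaluating `F` to true. -/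
def sel (F : SForm V T) (Ω : Multiset (SMap V T)) : Multiset (SMap V T) :=
  Ω.filter fun μ => evalF μ F = .t

/-- W3C difference: keep (with multiplicity) the mappings `μ1` of `Ω1` such that
every `μ2 ∈ Ω2` is incompatible with `μ1`, or compatible with
`(μ1 ∪ μ2)(F) = false`. -/
def wdiff (F : SForm V T) (Ω1 Ω2 : Multiset (SMap V T)) : Multiset (SMap V T) :=
  Ω1.filter fun μ1 => ∀ μ2 ∈ Ω2,
    ¬ Compat μ1 μ2 ∨ (Compat μ1 μ2 ∧ evalF (μ1 ∪ μ2) F = .f)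

end

/-!
Fix `μ1 ∈ Ω1`. Since `S = W1 ∩ W2 ≠ ∅`, the domain clause of minus never fires, so minus removes
`μ1` exactly when `μ1` is compatible with some `μ2 ∈ Ω2`. The renamed copy `μ3` of `μ2` has domain
disjoint from `W1`, so `μ1 ∪ μ3` always lies in `Ω1 ⋈ Ω3`; the atoms `y = ρ(y)` compare `μ1(y)` with
`μ2(y)`, so `F` holds on `μ1 ∪ μ3` exactly when `μ1 ∼ μ2`. Conversely, if `μ1` is compatible with
some `a ∪ μ3` satisfying `F`, then `μ1(y) = (a ∪ μ3)(y) = μ3(ρ y) = μ2(y)` on `S`, so `μ1 ∼ μ2`.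
-/

section Renaming

variable {V T : Type} [DecidableEq V] [DecidableEq T]

theorem TV.andTV_eq_t {p q : TV} : p.andTV q = .t ↔ p = .t ∧ q = .t := by
  cases p <;> cases q <;> simp [TV.andTV]

theorem evalF_eqv_eq_t {μ : SMap V T} {a b : V} :
    evalF μ (.eqv a b) = .t ↔ a ∈ μ ∧ μ.lookup a = μ.lookup b := by
  rw [Finmap.mem_iff]
  simp only [evalF]
  rcases μ.lookup a with _ | va <;> rcases μ.lookup b with _ | vb <;> simp

theorem evalF_foldl_fand_eq_t (μ : SMap V T) (f : V → SForm V T) (l : List V) (F : SForm V T) :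
    evalF μ (l.foldl (fun G y => .fand G (f y)) F) = .t ↔
      evalF μ F = .t ∧ ∀ y ∈ l, evalF μ (f y) = .t := by
  induction l generalizing F with
  | nil => simp
  | cons y l ih => simp [ih, evalF, TV.andTV_eq_t, and_assoc]

omit [DecidableEq T] in
theorem compat_union_self (μ ν : SMap V T) : Compat μ (μ ∪ ν) :=
  fun _ hz _ => (Finmap.lookup_union_left hz).symm

omit [DecidableEq T] in
theorem compat_of_disjoint_keys {μ ν : SMap V T} (h : Disjoint μ.keys ν.keys) : Compat μ ν :=
  fun _ hz hz' => absurd (Finmap.mem_keys.mpr hz') (Finset.disjoint_left.mp h (Finmap.mem_keys.mpr hz))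

omit [DecidableEq T] in
theorem mem_mjoin {Ω1 Ω2 : Multiset (SMap V T)} {ν : SMap V T} :
    ν ∈ mjoin Ω1 Ω2 ↔ ∃ a ∈ Ω1, ∃ b ∈ Ω2, Compat a b ∧ a ∪ b = ν := by
  simp [mjoin, and_assoc]

omit [DecidableEq T] in
theorem sminus_eq_msdiff {Ω1 Ω2 : Multiset (SMap V T)}
    (h : ∀ μ1 ∈ Ω1, ∀ μ2 ∈ Ω2, μ1.keys ∩ μ2.keys ≠ ∅) : sminus Ω1 Ω2 = msdiff Ω1 Ω2 :=
  Multiset.filter_congr fun μ1 hμ1 =>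
    forall₂_congr fun μ2 hμ2 => or_iff_left (h μ1 hμ1 μ2 hμ2)

omit [DecidableEq T] in
theorem msdiff_congr_right {Ω Ω' Ω'' : Multiset (SMap V T)}
    (h : ∀ μ ∈ Ω, (∃ ν ∈ Ω', Compat μ ν) ↔ ∃ ν ∈ Ω'', Compat μ ν) :
    msdiff Ω Ω' = msdiff Ω Ω'' :=
  Multiset.filter_congr fun μ hμ => by simpa only [not_exists, not_and] using (h μ hμ).not

theorem compat_of_evalF_union_renaming {S : Finset V} {ρ : V → V} {μ1 μ2 a b : SMap V T}
    (hdom : ∀ z ∈ μ1, z ∈ μ2 → z ∈ S) (hρ : ∀ y ∈ S, ρ y ∉ a)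
    (hb : ∀ y ∈ S, b.lookup (ρ y) = μ2.lookup y)
    (hF : ∀ y ∈ S, evalF (a ∪ b) (.eqv y (ρ y)) = .t) (hc : Compat μ1 (a ∪ b)) :
    Compat μ1 μ2 := by
  intro z hz1 hz2
  have hzS := hdom z hz1 hz2
  obtain ⟨hz, hval⟩ := evalF_eqv_eq_t.mp (hF z hzS)
  calc μ1.lookup z = (a ∪ b).lookup z := hc z hz1 hz
    _ = (a ∪ b).lookup (ρ z) := hval
    _ = b.lookup (ρ z) := Finmap.lookup_union_right (hρ z hzS)
    _ = μ2.lookup z := hb z hzS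

theorem evalF_union_renaming_eq_t {S : Finset V} {ρ : V → V} {μ1 μ2 b : SMap V T}
    (hS : ∀ y ∈ S, y ∈ μ1 ∧ y ∈ μ2) (hρ : ∀ y ∈ S, ρ y ∉ μ1)
    (hb : ∀ y ∈ S, b.lookup (ρ y) = μ2.lookup y) (hc : Compat μ1 μ2) :
    ∀ y ∈ S, evalF (μ1 ∪ b) (.eqv y (ρ y)) = .t := by
  intro y hy
  obtain ⟨hy1, hy2⟩ := hS y hy
  refine evalF_eqv_eq_t.mpr ⟨Finmap.mem_union.mpr (.inl hy1), ?_⟩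
  calc (μ1 ∪ b).lookup y = μ1.lookup y := Finmap.lookup_union_left hy1
    _ = μ2.lookup y := hc y hy1 hy2
    _ = b.lookup (ρ y) := (hb y hy).symm
    _ = (μ1 ∪ b).lookup (ρ y) := (Finmap.lookup_union_right (hρ y hy)).symm

def IsRenaming (S W : Finset V) (ρ : V → V) (μ μ' : SMap V T) : Prop :=
  μ'.keys = (W \ S) ∪ S.image ρ ∧ (∀ y ∈ W \ S, μ'.lookup y = μ.lookup y) ∧
    ∀ y ∈ S, μ'.lookup (ρ y) = μ.lookup y

omit [DecidableEq T] in
theorem IsRenaming.disjoint_keys {W W' : Finset V} {ρ : V → V} {μ μ' : SMap V T}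
    (h : IsRenaming (W' ∩ W) W ρ μ μ') (hfresh : Disjoint ((W' ∩ W).image ρ) W') :
    Disjoint W' μ'.keys := by
  rw [h.1, Finset.disjoint_union_right]
  exact ⟨Finset.disjoint_left.mpr fun z hz hz' => by simp_all, hfresh.symm⟩

theorem exists_compat_sel_mjoin_iff {Ω1 Ω2 Ω3 : Multiset (SMap V T)} {W1 W2 : Finset V}
    {ρ : V → V} {F : SForm V T} (h1 : ∀ μ ∈ Ω1, μ.keys = W1) (h2 : ∀ μ ∈ Ω2, μ.keys = W2)
    (hfresh : Disjoint ((W1 ∩ W2).image ρ) W1)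
    (hΩ3 : Multiset.Rel (IsRenaming (W1 ∩ W2) W2 ρ) Ω2 Ω3)
    (hF : ∀ ν, evalF ν F = .t ↔ ∀ y ∈ W1 ∩ W2, evalF ν (.eqv y (ρ y)) = .t)
    {μ1 : SMap V T} (hμ1 : μ1 ∈ Ω1) :
    (∃ μ2 ∈ Ω2, Compat μ1 μ2) ↔ ∃ ν ∈ sel F (mjoin Ω1 Ω3), Compat μ1 ν := by
  have hρ : ∀ μ ∈ Ω1, ∀ y ∈ W1 ∩ W2, ρ y ∉ μ := fun μ hμ y hy hmem =>
    Finset.disjoint_left.mp hfresh (Finset.mem_image_of_mem ρ hy)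
      (h1 μ hμ ▸ Finmap.mem_keys.mpr hmem)
  constructor
  · rintro ⟨μ2, hμ2, hc⟩
    obtain ⟨μ3, hμ3, hren⟩ := Multiset.exists_mem_of_rel_of_mem hΩ3 hμ2
    have hjoin : μ1 ∪ μ3 ∈ mjoin Ω1 Ω3 := mem_mjoin.mpr
      ⟨μ1, hμ1, μ3, hμ3, compat_of_disjoint_keys (h1 μ1 hμ1 ▸ hren.disjoint_keys hfresh), rfl⟩
    have hS : ∀ y ∈ W1 ∩ W2, y ∈ μ1 ∧ y ∈ μ2 := fun y hy => by
      rw [← h1 μ1 hμ1, ← h2 μ2 hμ2, Finset.mem_inter] at hy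
      exact ⟨Finmap.mem_keys.mp hy.1, Finmap.mem_keys.mp hy.2⟩
    exact ⟨μ1 ∪ μ3, Multiset.mem_filter.mpr
      ⟨hjoin, (hF _).mpr (evalF_union_renaming_eq_t hS (hρ μ1 hμ1) hren.2.2 hc)⟩,
      compat_union_self μ1 μ3⟩
  · rintro ⟨ν, hν, hc⟩
    obtain ⟨hjoin, hνF⟩ := Multiset.mem_filter.mp hν
    obtain ⟨a, ha, μ3, hμ3, -, rfl⟩ := mem_mjoin.mp hjoin
    obtain ⟨μ2, hμ2, hren⟩ := Multiset.exists_mem_of_rel_of_mem (Multiset.rel_flip.mpr hΩ3) hμ3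
    have hdom : ∀ z ∈ μ1, z ∈ μ2 → z ∈ W1 ∩ W2 := fun z hz1 hz2 => by
      rw [← h1 μ1 hμ1, ← h2 μ2 hμ2]
      exact Finset.mem_inter.mpr ⟨Finmap.mem_keys.mpr hz1, Finmap.mem_keys.mpr hz2⟩
    exact ⟨μ2, hμ2, compat_of_evalF_union_renaming hdom (hρ a ha) hren.2.2 ((hF _).mp hνF) hc⟩

end Renaming

/-- The intersection `S = W1 ∩ W2` is nonempty because it lists as `x :: xs`. -/
theorem stmt_3_general {V T : Type} [DecidableEq V] [DecidableEq T]
    (Ω1 Ω2 Ω3 : Multiset (SMap V T)) (W1 W2 : Finset V)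
    (h1 : ∀ μ ∈ Ω1, Finmap.keys μ = W1) (h2 : ∀ μ ∈ Ω2, Finmap.keys μ = W2)
    (ρ : V → V)
    (hfresh : Disjoint ((W1 ∩ W2).image ρ) (W1 ∪ W2))
    (hΩ3 : Multiset.Rel (fun μ2 μ3 =>
        Finmap.keys μ3 = (W2 \ (W1 ∩ W2)) ∪ (W1 ∩ W2).image ρ ∧
        (∀ y ∈ W2 \ (W1 ∩ W2), μ3.lookup y = μ2.lookup y) ∧
        (∀ y ∈ W1 ∩ W2, μ3.lookup (ρ y) = μ2.lookup y)) Ω2 Ω3)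
    (x : V) (xs : List V) (hS : (W1 ∩ W2).toList = x :: xs) :
    sminus Ω1 Ω2 =
      msdiff Ω1
        (sel (xs.foldl (fun F y => SForm.fand F (SForm.eqv y (ρ y)))
              (SForm.eqv x (ρ x)))
          (mjoin Ω1 Ω3)) := by
  have hmemS : ∀ y, y ∈ x :: xs ↔ y ∈ W1 ∩ W2 := fun y => by rw [← hS, Finset.mem_toList]
  have hmeet : ∀ μ1 ∈ Ω1, ∀ μ2 ∈ Ω2, μ1.keys ∩ μ2.keys ≠ ∅ := fun μ1 hμ1 μ2 hμ2 => by
    rw [h1 μ1 hμ1, h2 μ2 hμ2]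
    exact Finset.ne_empty_of_mem ((hmemS x).mp List.mem_cons_self)
  have hF : ∀ ν : SMap V T, evalF ν (xs.foldl (fun F y => SForm.fand F (SForm.eqv y (ρ y)))
      (SForm.eqv x (ρ x))) = .t ↔ ∀ y ∈ W1 ∩ W2, evalF ν (.eqv y (ρ y)) = .t := fun ν => by
    rw [evalF_foldl_fand_eq_t ν (fun y => .eqv y (ρ y))]
    simp only [← hmemS, List.forall_mem_cons]
  rw [sminus_eq_msdiff hmeet]
  exact msdiff_congr_right fun μ1 hμ1 => exists_compat_sel_mjoin_iff h1 h2
    (hfresh.mono_right Finset.subset_union_left) hΩ3 hF hμ1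

/-- the SPARQL minus operation is expressible with join,
selection and simple difference.  `Ω1` and `Ω2` are domain-uniform with
domains `W1` and `W2`; `S = W1 ∩ W2` is nonempty (it lists as `x :: xs`);
`ρ` renames `S` to fresh variables; `Ω3` is the renaming of `Ω2` (each
`μ2` is replaced by the mapping with domain `(W2 \ S) ∪ ρ(S)` agreeing with
`μ2` on `W2 \ S` and sending `ρ(y)` to `μ2(y)` for `y ∈ S`); and the
selection formula is the conjunction of the atoms `y = ρ(y)` over `y ∈ S`. -/
theorem stmt_3 {V T : Type} [DecidableEq V] [DecidableEq T]
    (Ω1 Ω2 Ω3 : Multiset (SMap V T)) (W1 W2 : Finset V)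
    (h1 : ∀ μ ∈ Ω1, Finmap.keys μ = W1) (h2 : ∀ μ ∈ Ω2, Finmap.keys μ = W2)
    (ρ : V → V)
    (hinj : Set.InjOn ρ ((W1 ∩ W2 : Finset V) : Set V))
    (hfresh : Disjoint ((W1 ∩ W2).image ρ) (W1 ∪ W2))
    (hΩ3 : Multiset.Rel (fun μ2 μ3 =>
        Finmap.keys μ3 = (W2 \ (W1 ∩ W2)) ∪ (W1 ∩ W2).image ρ ∧
        (∀ y ∈ W2 \ (W1 ∩ W2), μ3.lookup y = μ2.lookup y) ∧
        (∀ y ∈ W1 ∩ W2, μ3.lookup (ρ y) = μ2.lookup y)) Ω2 Ω3)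
    (x : V) (xs : List V) (hS : (W1 ∩ W2).toList = x :: xs) :
    sminus Ω1 Ω2 =
      msdiff Ω1
        (sel (xs.foldl (fun F y => SForm.fand F (SForm.eqv y (ρ y)))
              (SForm.eqv x (ρ x)))
          (mjoin Ω1 Ω3)) :=
  stmt_3_general Ω1 Ω2 Ω3 W1 W2 h1 h2 ρ hfresh hΩ3 x xs hS
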